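/- arXiv:2410.22831 — 4 statements merged into one kernel-verified Lean document; each statement's English description precedes it below -/
import Mathlib

section
/- For integers T and Q with Q ≠ 0, let L_n be the Lucas sequence defined by L_0 = 0, L_1 = 1, L_{n+1} = T L_n - Q L_{n-1}, and let t = (T^2 - 2Q)/Q and Δ = T^2 - 4Q. Then for every natural number n, C_n(t) - 2 = (Δ / Q^n) · L_n^2, where C_n is the Chebyshev polynomial of the first kind with C_0 = 2, C_1 = x. -/
/-- Chebyshev polynomial of the first kind (rescaled): C 0 = 2, C 1 = x. -/
def chebC (x : ℚ) : ℕ → ℚ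
  | 0 => 2
  | 1 => x
  | n + 2 => x * chebC x (n + 1) - chebC x n

theorem chebC_sub_two_eq_delta_mul_lucas_sq (T Q : ℤ) (hQ : Q ≠ 0)
    (L : ℕ → ℚ) (hL0 : L 0 = 0) (hL1 : L 1 = 1)
    (hLrec : ∀ n, L (n + 2) = (T : ℚ) * L (n + 1) - (Q : ℚ) * L n)
    (t : ℚ) (ht : t = ((T : ℚ) ^ 2 - 2 * Q) / Q)
    (Δ : ℚ) (hΔ : Δ = (T : ℚ) ^ 2 - 4 * Q) :
    ∀ n : ℕ, chebC t n - 2 = (Δ / (Q : ℚ) ^ n) * L n ^ 2 := by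
  have hQ' : (Q : ℚ) ≠ 0 := Int.cast_ne_zero.mpr hQ
  have hQn : ∀ n : ℕ, ((Q : ℚ)) ^ n ≠ 0 := fun n => pow_ne_zero n hQ'
  -- Catalan-type identity
  have E : ∀ n : ℕ, L (n+1)^2 - T * L (n+1) * L n + Q * L n ^ 2 = (Q : ℚ)^n := by
    intro n
    induction n with
    | zero => simp [hL0, hL1]
    | succ n ih =>
      rw [hLrec]
      linear_combination (Q : ℚ) * ih
  have key : ∀ n : ℕ, (chebC t n - 2 = (Δ / (Q : ℚ) ^ n) * L n ^ 2) ∧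
      (chebC t (n+1) - 2 = (Δ / (Q : ℚ) ^ (n+1)) * L (n+1) ^ 2) := by
    intro n
    induction n with
    | zero =>
      constructor
      · simp [chebC, hL0]
      · simp only [chebC, hL1]
        rw [ht, hΔ]
        field_simp
        ring
    | succ n ih =>
      refine ⟨ih.2, ?_⟩
      have h1 := ih.1
      have h2 := ih.2
      have hc : chebC t (n+2) = t * chebC t (n+1) - chebC t n := rfl
      rw [hc, hLrec, ht, hΔ]
      rw [ht, hΔ] at h1 h2
      have e := E n
      field_simp at h1 h2 ⊢
      linear_combination ((T:ℚ)^2 - 2*Q) * (Q:ℚ) * h2 - (Q:ℚ)^3 * h1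
        - 2 * ((T:ℚ)^2 - 4*Q) * (Q:ℚ)^2 * e
  exact fun n => (key n).1
end

section
/- Let K be a field of characteristic ≠ 2, t ∈ K with t^2 ≠ 4, and let R(t) be the commutative ring of 2×2 matrices over K commuting with D_t = [[0,-1],[1,t]]. For a, b ∈ K with a^2 - 4b ≠ 0, there exists Y ∈ R(t) with trace a and determinant b if and only if (t^2-4)(a^2-4b) is a square in K. Moreover, when such Y exists, the only matrices in R(t) with trace a and determinant b are Y and (det Y)·Y^{-1}. -/
lemma comm_form {K : Type*} [Field K] (t : K) (Y : Matrix (Fin 2) (Fin 2) K)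
    (hY : Y * !![0, -1; 1, t] = !![0, -1; 1, t] * Y) :
    Y = !![Y 0 0, -(Y 1 0); Y 1 0, Y 0 0 + t * Y 1 0] := by
  have h00 : (Y * !![0, -1; 1, t]) 0 0 = (!![0, -1; 1, t] * Y) 0 0 := by rw [hY]
  have h01 : (Y * !![0, -1; 1, t]) 0 1 = (!![0, -1; 1, t] * Y) 0 1 := by rw [hY]
  simp [Matrix.mul_apply, Fin.sum_univ_two] at h00 h01
  rw [Matrix.eta_fin_two Y]
  ext i j
  fin_cases i <;> fin_cases j <;> simp
  · linear_combination h00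
  · linear_combination h01 - t * h00

theorem trace_det_realization (K : Type*) [Field K] (h2 : (2 : K) ≠ 0)
    (t : K) (ht : t ^ 2 ≠ 4) (a b : K) (hab : a ^ 2 - 4 * b ≠ 0)
    (D : Matrix (Fin 2) (Fin 2) K) (hD : D = !![0, -1; 1, t]) :
    ((∃ Y : Matrix (Fin 2) (Fin 2) K, Y * D = D * Y ∧ Y.trace = a ∧ Y.det = b) ↔
      IsSquare ((t ^ 2 - 4) * (a ^ 2 - 4 * b))) ∧
    (∀ Y Z : Matrix (Fin 2) (Fin 2) K, Y * D = D * Y → Z * D = D * Z →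
      Y.trace = a → Y.det = b → Z.trace = a → Z.det = b →
      Z = Y ∨ Z = Y.adjugate) := by
  have ht4 : t ^ 2 - 4 ≠ 0 := sub_ne_zero.mpr ht
  subst hD
  constructor
  · constructor
    · rintro ⟨Y, hY, hta, hdb⟩
      have hform := comm_form t Y hY
      rw [hform] at hta hdb
      rw [Matrix.trace_fin_two_of] at hta
      rw [Matrix.det_fin_two_of] at hdb
      refine ⟨(t ^ 2 - 4) * Y 1 0, ?_⟩
      linear_combination (-(t ^ 2 - 4)) *
        ((2 * Y 0 0 + t * Y 1 0 + a) * hta - 4 * hdb)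
    · rintro ⟨c, hc⟩
      obtain ⟨q, hq⟩ : ∃ q : K, q = c / (t ^ 2 - 4) := ⟨_, rfl⟩
      obtain ⟨p, hp⟩ : ∃ p : K, p = (a - t * q) / 2 := ⟨_, rfl⟩
      have hq2 : (t ^ 2 - 4) * q ^ 2 = a ^ 2 - 4 * b := by
        rw [hq]
        field_simp
        linear_combination -hc
      have hpeq : 2 * p + t * q = a := by rw [hp]; field_simp; ring
      refine ⟨!![p, -q; q, p + t * q], ?_, ?_, ?_⟩
      · ext i j
        fin_cases i <;> fin_cases j <;>
          simp [Matrix.mul_apply, Fin.sum_univ_two] <;> ring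
      · rw [Matrix.trace_fin_two_of]; linear_combination hpeq
      · rw [Matrix.det_fin_two_of]
        have h4 : (4 : K) ≠ 0 := by
          intro h; exact mul_ne_zero h2 h2 (by linear_combination h)
        refine mul_left_cancel₀ h4 ?_
        linear_combination (2 * p + t * q + a) * hpeq - hq2
  · intro Y Z hY hZ htY hdY htZ hdZ
    have hformY := comm_form t Y hY
    have hformZ := comm_form t Z hZ
    set pY := Y 0 0; set qY := Y 1 0
    set pZ := Z 0 0; set qZ := Z 1 0
    rw [hformY] at htY hdY
    rw [hformZ] at htZ hdZ
    rw [Matrix.trace_fin_two_of] at htY htZ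
    rw [Matrix.det_fin_two_of] at hdY hdZ
    have hq2 : (t ^ 2 - 4) * (qZ - qY) * (qZ + qY) = 0 := by
      linear_combination (2 * pZ + t * qZ + a) * htZ - 4 * hdZ
        - ((2 * pY + t * qY + a) * htY - 4 * hdY)
    rcases mul_eq_zero.mp hq2 with h | hsum
    · rcases mul_eq_zero.mp h with h' | hdiff
      · exact absurd h' ht4
      · left
        have hqq : qZ = qY := by linear_combination hdiff
        have hpp : pZ = pY := by
          have h2' : (2 : K) * (pZ - pY) = 0 := by
            linear_combination htZ - htY - t * hdiff
          have := (mul_eq_zero.mp h2').resolve_left h2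
          linear_combination this
        rw [hformZ, hformY, hqq, hpp]
    · right
      have hqq : qZ = -qY := by linear_combination hsum
      have hpp : pZ = pY + t * qY := by
        have h2' : (2 : K) * (pZ - pY - t * qY) = 0 := by
          linear_combination htZ - htY - t * hsum
        have := (mul_eq_zero.mp h2').resolve_left h2
        linear_combination this
      rw [hformZ, hformY, Matrix.adjugate_fin_two_of, hqq, hpp]
      ext i j
      fin_cases i <;> fin_cases j <;> simp <;> ring
end

section
/- Let t be rational with t ≠ 0, ±1, ±2, and suppose [ℚ(√(2+t), √(2-t)) : ℚ] = 4. Then the polynomial x^4 - 4x^2 + 2 - t is irreducible over ℚ and the Galois group of its splitting field over ℚ is non-abelian of order 8 (isomorphic to the dihedral group D_4). -/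
open Polynomial IntermediateField Module

section Helpers

variable {F E : Type*} [Field F] [Field E] [Algebra F E]

lemma mem_range_algebraMap_iff {K L : Type*} [Field K] [Field L] [Algebra K L]
    (F : IntermediateField K L) {x : L} : x ∈ (algebraMap F L).range ↔ x ∈ F :=
  ⟨fun ⟨y, hy⟩ => hy ▸ y.2, fun h => ⟨⟨x, h⟩, rfl⟩⟩



variable {F E : Type*} [Field F] [Field E] [Algebra F E]

lemma quad_integral (s : E) (d : F) (hs : s ^ 2 = algebraMap F E d) : IsIntegral F s := by
  refine ⟨X ^ 2 - C d, monic_X_pow_sub_C _ (by norm_num), ?_⟩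
  simp [eval₂_sub, hs]

lemma quad_rep (s : E) (d : F) (hs : s ^ 2 = algebraMap F E d)
    {x : E} (hx : x ∈ IntermediateField.adjoin F {s}) :
    ∃ u v : F, x = algebraMap F E u + algebraMap F E v * s := by
  have hint : IsIntegral F s := quad_integral s d hs
  have hx' : x ∈ Algebra.adjoin F {s} := by
    have h := IntermediateField.adjoin_simple_toSubalgebra_of_isAlgebraic (F := F) (α := s) hint.isAlgebraic
    have hx2 : x ∈ (IntermediateField.adjoin F {s}).toSubalgebra := hx
    rwa [h] at hx2
  rw [Algebra.adjoin_singleton_eq_range_aeval] at hx'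
  obtain ⟨q, hq⟩ := hx'
  have hm : (X ^ 2 - C d).Monic := monic_X_pow_sub_C _ (by norm_num)
  have hdiv := modByMonic_add_div q (X ^ 2 - C d)
  set r := q %ₘ (X ^ 2 - C d) with hr
  have hdeg1 : r.degree ≤ 1 := by
    have h2 := degree_modByMonic_lt q hm
    rw [degree_X_pow_sub_C (by norm_num)] at h2
    exact Order.le_of_lt_succ (by exact_mod_cast h2)
  have hrX := eq_X_add_C_of_degree_le_one hdeg1
  refine ⟨r.coeff 0, r.coeff 1, ?_⟩
  have : aeval s q = aeval s r := by
    conv_lhs => rw [← hdiv]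
    rw [map_add, map_mul]
    simp [hs]
  rw [← hq]
  simp only [AlgHom.toRingHom_eq_coe, RingHom.coe_coe]
  rw [this]
  conv_lhs => rw [hrX]
  simp only [map_add, map_mul, aeval_C, aeval_X]
  ring

lemma quad_indep (s : E) (hns : s ∉ (algebraMap F E).range)
    {u v : F} (h : algebraMap F E u + algebraMap F E v * s = 0) : u = 0 ∧ v = 0 := by
  have hinj := (algebraMap F E).injective
  by_cases hv : v = 0
  · subst hv
    simp only [map_zero, zero_mul, add_zero] at h
    exact ⟨by apply hinj; simpa using h, rfl⟩
  · exfalso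
    apply hns
    refine ⟨-u / v, ?_⟩
    rw [map_div₀, map_neg]
    have hv' : algebraMap F E v ≠ 0 := fun hh => hv (hinj (by simpa using hh))
    rw [div_eq_iff hv']
    linear_combination -h

lemma quad_indep' (s : E) (hns : s ∉ (algebraMap F E).range)
    {u v u' v' : F} (h : algebraMap F E u + algebraMap F E v * s
      = algebraMap F E u' + algebraMap F E v' * s) : u = u' ∧ v = v' := by
  have h0 : algebraMap F E (u - u') + algebraMap F E (v - v') * s = 0 := by
    rw [map_sub, map_sub]; ring_nf; linear_combination h
  obtain ⟨h1, h2⟩ := quad_indep s hns h0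
  exact ⟨sub_eq_zero.mp h1, sub_eq_zero.mp h2⟩

lemma quad_finrank (s : E) (d : F) (hs : s ^ 2 = algebraMap F E d)
    (hns : s ∉ (algebraMap F E).range) : finrank F F⟮s⟯ = 2 := by
  have hint : IsIntegral F s := quad_integral s d hs
  rw [IntermediateField.adjoin.finrank hint]
  have hdvd : minpoly F s ∣ X ^ 2 - C d := by
    apply minpoly.dvd
    simp [map_sub, hs]
  have hne : (X ^ 2 - C d) ≠ 0 := (monic_X_pow_sub_C _ (by norm_num)).ne_zero
  have hle : (minpoly F s).natDegree ≤ 2 := by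
    have := natDegree_le_of_dvd hdvd hne
    rwa [natDegree_X_pow_sub_C] at this
  have hpos : 0 < (minpoly F s).natDegree := minpoly.natDegree_pos hint
  have hne1 : (minpoly F s).natDegree ≠ 1 := by
    intro h1
    apply hns
    rw [← minpoly.degree_eq_one_iff,
      show (1 : WithBot ℕ) = ((1 : ℕ) : WithBot ℕ) from rfl,
      degree_eq_iff_natDegree_eq (minpoly.ne_zero hint)]
    exact h1
  omega

lemma quad_finrank_le (s : E) (d : F) (hs : s ^ 2 = algebraMap F E d) :
    finrank F F⟮s⟯ ≤ 2 := by
  have hint : IsIntegral F s := quad_integral s d hs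
  rw [IntermediateField.adjoin.finrank hint]
  have hdvd : minpoly F s ∣ X ^ 2 - C d := by
    apply minpoly.dvd
    simp [map_sub, hs]
  have hne : (X ^ 2 - C d) ≠ 0 := (monic_X_pow_sub_C _ (by norm_num)).ne_zero
  have := natDegree_le_of_dvd hdvd hne
  rwa [natDegree_X_pow_sub_C] at this

end Helpers

set_option maxHeartbeats 4000000 in
set_option synthInstance.maxHeartbeats 400000 in
theorem quartic_dihedral_galois (t : ℚ)
    (ht0 : t ≠ 0) (ht1 : t ≠ 1) (ht1' : t ≠ -1) (ht2 : t ≠ 2) (ht2' : t ≠ -2)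
    (s1 s2 : ℂ) (hs1 : s1 ^ 2 = 2 + (t : ℂ)) (hs2 : s2 ^ 2 = 2 - (t : ℂ))
    (hdeg : Module.finrank ℚ (IntermediateField.adjoin ℚ {s1, s2} : IntermediateField ℚ ℂ) = 4) :
    Irreducible (X ^ 4 - 4 * X ^ 2 + Polynomial.C (2 - t) : Polynomial ℚ) ∧
    Nat.card ((X ^ 4 - 4 * X ^ 2 + Polynomial.C (2 - t) : Polynomial ℚ).SplittingField ≃ₐ[ℚ]
        (X ^ 4 - 4 * X ^ 2 + Polynomial.C (2 - t) : Polynomial ℚ).SplittingField) = 8 ∧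
    (¬ ∀ σ τ : (X ^ 4 - 4 * X ^ 2 + Polynomial.C (2 - t) : Polynomial ℚ).SplittingField ≃ₐ[ℚ]
        (X ^ 4 - 4 * X ^ 2 + Polynomial.C (2 - t) : Polynomial ℚ).SplittingField,
        σ * τ = τ * σ) ∧
    Nonempty (((X ^ 4 - 4 * X ^ 2 + Polynomial.C (2 - t) : Polynomial ℚ).SplittingField ≃ₐ[ℚ]
        (X ^ 4 - 4 * X ^ 2 + Polynomial.C (2 - t) : Polynomial ℚ).SplittingField) ≃*
        DihedralGroup 4) := by
  classical
  have hsqc : ∀ y z : ℂ, y ^ 2 = z ^ 2 → y = z ∨ y = -z := by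
    intro y z h
    have h0 : (y - z) * (y + z) = 0 := by linear_combination h
    rcases mul_eq_zero.mp h0 with h1 | h1
    · exact Or.inl (sub_eq_zero.mp h1)
    · exact Or.inr (eq_neg_of_add_eq_zero_left h1)
  have hs1ne0 : s1 ≠ 0 := by
    intro h; rw [h] at hs1; apply ht2'
    have : (t : ℂ) = -2 := by linear_combination -hs1
    exact_mod_cast this
  have hratmem : ∀ (F : IntermediateField ℚ ℂ) (r : ℚ), (r : ℂ) ∈ F := by
    intro F r
    rw [show ((r : ℂ)) = algebraMap ℚ ℂ r from (eq_ratCast _ r).symm]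
    exact F.algebraMap_mem r
  -- 2 + t is not a rational square
  have hns1 : ¬ ∃ r : ℚ, r ^ 2 = 2 + t := by
    rintro ⟨r, hr⟩
    have hrc : s1 ^ 2 = (r : ℂ) ^ 2 := by
      rw [hs1]; exact_mod_cast (congrArg (fun x : ℚ => (x : ℂ)) hr).symm
    have hmem : s1 ∈ ℚ⟮s2⟯ := by
      rcases hsqc s1 r hrc with h | h <;> rw [h]
      · exact hratmem _ r
      · exact neg_mem (hratmem _ r)
    have heq : IntermediateField.adjoin ℚ {s1, s2} = ℚ⟮s2⟯ := by
      apply le_antisymm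
      · rw [adjoin_le_iff]
        rintro x (rfl | rfl)
        · exact hmem
        · exact subset_adjoin _ _ rfl
      · exact adjoin.mono _ _ _ (by simp)
    rw [heq] at hdeg
    have hle := quad_finrank_le (F := ℚ) s2 (2 - t)
      (by rw [eq_ratCast]; push_cast; exact hs2)
    omega
  -- 2 - t is not a rational square
  have hns2 : ¬ ∃ r : ℚ, r ^ 2 = 2 - t := by
    rintro ⟨r, hr⟩
    have hrc : s2 ^ 2 = (r : ℂ) ^ 2 := by
      rw [hs2]; exact_mod_cast (congrArg (fun x : ℚ => (x : ℂ)) hr).symm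
    have hmem : s2 ∈ ℚ⟮s1⟯ := by
      rcases hsqc s2 r hrc with h | h <;> rw [h]
      · exact hratmem _ r
      · exact neg_mem (hratmem _ r)
    have heq : IntermediateField.adjoin ℚ {s1, s2} = ℚ⟮s1⟯ := by
      apply le_antisymm
      · rw [adjoin_le_iff]
        rintro x (rfl | rfl)
        · exact subset_adjoin _ _ rfl
        · exact hmem
      · exact adjoin.mono _ _ _ (by simp)
    rw [heq] at hdeg
    have hle := quad_finrank_le (F := ℚ) s1 (2 + t)
      (by rw [eq_ratCast]; push_cast; exact hs1)
    omega
  -- if s2 ∈ ℚ⟮s1⟯ we get a contradiction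
  have hs2notin : s2 ∉ ℚ⟮s1⟯ := by
    intro hmem
    have heq : IntermediateField.adjoin ℚ {s1, s2} = ℚ⟮s1⟯ := by
      apply le_antisymm
      · rw [adjoin_le_iff]
        rintro x (rfl | rfl)
        · exact subset_adjoin _ _ rfl
        · exact hmem
      · exact adjoin.mono _ _ _ (by simp)
    rw [heq] at hdeg
    have hle := quad_finrank_le (F := ℚ) s1 (2 + t)
      (by rw [eq_ratCast]; push_cast; exact hs1)
    omega
  have hs1notin : s1 ∉ (algebraMap ℚ ℂ).range := by
    rintro ⟨r, hr⟩
    apply hns1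
    refine ⟨r, ?_⟩
    have : (r : ℂ) ^ 2 = 2 + (t : ℂ) := by
      rw [← hs1, ← hr, eq_ratCast]
    exact_mod_cast this
  -- key1 : nothing in ℚ(s1) squares to 2 + s1
  have key1 : ∀ x : ℂ, x ∈ ℚ⟮s1⟯ → x ^ 2 ≠ 2 + s1 := by
    intro x hx hxx
    obtain ⟨a, b, hab⟩ := quad_rep (F := ℚ) s1 (2 + t)
      (by rw [eq_ratCast]; push_cast; exact hs1) hx
    rw [eq_ratCast, eq_ratCast] at hab
    subst hab
    have hlin : algebraMap ℚ ℂ (a ^ 2 + b ^ 2 * (2 + t) - 2) +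
        algebraMap ℚ ℂ (2 * a * b - 1) * s1 = 0 := by
      rw [eq_ratCast, eq_ratCast]
      push_cast
      linear_combination hxx - (b : ℂ) ^ 2 * hs1
    obtain ⟨e1, e2⟩ := quad_indep s1 hs1notin hlin
    apply hns2
    refine ⟨a ^ 2 - b ^ 2 * (2 + t), ?_⟩
    linear_combination (a ^ 2 + b ^ 2 * (2 + t) + 2) * e1 - (2 + t) * (2 * a * b + 1) * e2
  -- key2 : nothing in ℚ(s1,s2) squares to 2 + s1
  have key2 : ∀ x : ℂ, x ∈ IntermediateField.adjoin ℚ {s1, s2} → x ^ 2 ≠ 2 + s1 := by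
    intro x hx hxx
    have hx2 : x ∈ IntermediateField.adjoin ℚ⟮s1⟯ {s2} := by
      have h := adjoin_simple_adjoin_simple (F := ℚ) s1 s2
      have hx3 : x ∈ (ℚ⟮s1⟯⟮s2⟯.restrictScalars ℚ) := by rw [← h] at hx; exact hx
      exact hx3
    have hd2 : s2 ^ 2 = algebraMap ℚ⟮s1⟯ ℂ (algebraMap ℚ ℚ⟮s1⟯ (2 - t)) := by
      rw [← IsScalarTower.algebraMap_apply ℚ ℚ⟮s1⟯ ℂ, eq_ratCast]
      push_cast; exact hs2
    obtain ⟨u, v, huv⟩ := quad_rep s2 _ hd2 hx2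
    have hs2notin' : s2 ∉ (algebraMap ℚ⟮s1⟯ ℂ).range := by
      rw [mem_range_algebraMap_iff]; exact hs2notin
    have he : (2 : ℂ) + s1 ∈ ℚ⟮s1⟯ := by
      refine add_mem ?_ (subset_adjoin _ _ rfl)
      exact_mod_cast hratmem ℚ⟮s1⟯ 2
    have hlin : algebraMap ℚ⟮s1⟯ ℂ (u ^ 2 + v ^ 2 * (algebraMap ℚ ℚ⟮s1⟯ (2 - t))
          - ⟨2 + s1, he⟩) +
        algebraMap ℚ⟮s1⟯ ℂ (2 * u * v) * s2 = 0 := by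
      have hu : algebraMap ℚ⟮s1⟯ ℂ u = (u : ℂ) := rfl
      have hv : algebraMap ℚ⟮s1⟯ ℂ v = (v : ℂ) := rfl
      have hd : algebraMap ℚ⟮s1⟯ ℂ (algebraMap ℚ ℚ⟮s1⟯ (2 - t)) = 2 - (t : ℂ) := by
        rw [← IsScalarTower.algebraMap_apply ℚ ℚ⟮s1⟯ ℂ, eq_ratCast]; push_cast; ring
      have he2 : algebraMap ℚ⟮s1⟯ ℂ ⟨2 + s1, he⟩ = 2 + s1 := rfl
      rw [map_sub, map_add, map_mul, map_mul, map_mul, map_pow, map_pow, map_ofNat,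
        hu, hv, hd, he2]
      rw [huv, hu, hv] at hxx
      linear_combination hxx - (v : ℂ) ^ 2 * hs2
    obtain ⟨e1, e2⟩ := quad_indep s2 hs2notin' hlin
    have huv0 : u = 0 ∨ v = 0 := by
      have h2 : (2 : ℚ⟮s1⟯) ≠ 0 := two_ne_zero
      rcases mul_eq_zero.mp e2 with h | h
      · rcases mul_eq_zero.mp h with h' | h'
        · exact absurd h' h2
        · exact Or.inl h'
      · exact Or.inr h
    rcases huv0 with h0 | h0
    · -- u = 0 : v^2 * (2-t) = 2 + s1 with v ∈ ℚ(s1)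
      subst h0
      have he1 : (v : ℂ) ^ 2 * (2 - (t : ℂ)) = 2 + s1 := by
        have hv2 : v ^ 2 * (algebraMap ℚ ℚ⟮s1⟯ (2 - t)) = ⟨2 + s1, he⟩ := by
          linear_combination e1
        have h3 := congrArg (algebraMap ℚ⟮s1⟯ ℂ) hv2
        rw [map_mul, map_pow] at h3
        have hd : algebraMap ℚ⟮s1⟯ ℂ (algebraMap ℚ ℚ⟮s1⟯ (2 - t)) = 2 - (t : ℂ) := by
          rw [← IsScalarTower.algebraMap_apply ℚ ℚ⟮s1⟯ ℂ, eq_ratCast]; push_cast; ring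
        rw [hd] at h3
        exact h3
      obtain ⟨a, b, hab⟩ := quad_rep (F := ℚ) s1 (2 + t)
        (by rw [eq_ratCast]; push_cast; exact hs1) v.2
      rw [eq_ratCast, eq_ratCast] at hab
      rw [hab] at he1
      have hlin2 : algebraMap ℚ ℂ ((a ^ 2 + b ^ 2 * (2 + t)) * (2 - t) - 2) +
          algebraMap ℚ ℂ (2 * a * b * (2 - t) - 1) * s1 = 0 := by
        rw [eq_ratCast, eq_ratCast]
        push_cast
        linear_combination he1 - (b : ℂ) ^ 2 * (2 - (t : ℂ)) * hs1
      obtain ⟨f1, f2⟩ := quad_indep s1 hs1notin hlin2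
      apply hns2
      refine ⟨(a ^ 2 - b ^ 2 * (2 + t)) * (2 - t), ?_⟩
      linear_combination ((a ^ 2 + b ^ 2 * (2 + t)) * (2 - t) + 2) * f1 -
        (2 + t) * (2 * a * b * (2 - t) + 1) * f2
    · -- v = 0 : u^2 = 2 + s1 with u ∈ ℚ(s1)
      subst h0
      have he1 : (u : ℂ) ^ 2 = 2 + s1 := by
        have hu2 : u ^ 2 = (⟨2 + s1, he⟩ : ℚ⟮s1⟯) := by linear_combination e1
        have h3 := congrArg (algebraMap ℚ⟮s1⟯ ℂ) hu2
        rw [map_pow] at h3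
        exact h3
      exact key1 (u : ℂ) u.2 he1
  -- the roots α and β
  obtain ⟨α, hαe⟩ : ∃ z : ℂ, z ^ 2 = 2 + s1 := by
    exact IsAlgClosed.exists_pow_nat_eq (2 + s1) zero_lt_two
  obtain ⟨β, hβe⟩ : ∃ z : ℂ, z ^ 2 = 2 - s1 := by
    exact IsAlgClosed.exists_pow_nat_eq (2 - s1) zero_lt_two
  have hα0 : α ≠ 0 := by
    intro h
    rw [h] at hαe
    have h1 : s1 = -2 := by linear_combination -hαe
    rw [h1] at hs1
    exact ht2 (by exact_mod_cast (by linear_combination -hs1 : (t : ℂ) = 2))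
  have hβ0 : β ≠ 0 := by
    intro h
    rw [h] at hβe
    have h1 : s1 = 2 := by linear_combination hβe
    rw [h1] at hs1
    exact ht2 (by exact_mod_cast (by linear_combination -hs1 : (t : ℂ) = 2))
  have hα2β2 : α ^ 2 ≠ β ^ 2 := by
    rw [hαe, hβe]
    intro h
    exact hs1ne0 (by linear_combination h / 2)
  have hαneβ : α ≠ β := fun h => hα2β2 (by rw [h])
  have hαneβ' : α ≠ -β := fun h => hα2β2 (by rw [h]; ring)
  set p : ℚ[X] := X ^ 4 - 4 * X ^ 2 + Polynomial.C (2 - t) with hpdef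
  have hpm : p.Monic := by
    unfold p
    monicity!
  have hpdeg : p.natDegree = 4 := by
    unfold p
    compute_degree!
  have hpne : p ≠ 0 := hpm.ne_zero
  have hfact : ∀ x : ℂ, (x ^ 2 - α ^ 2) * (x ^ 2 - β ^ 2)
      = x ^ 4 - 4 * x ^ 2 + (2 - (t : ℂ)) := by
    intro x
    rw [hαe, hβe]
    linear_combination -hs1
  have haev : ∀ x : ℂ, aeval x p = (x ^ 2 - α ^ 2) * (x ^ 2 - β ^ 2) := by
    intro x
    rw [hfact x]
    unfold p
    simp only [map_add, map_sub, map_mul, map_pow, aeval_X, aeval_C, map_ofNat]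
    rw [eq_ratCast]
    try push_cast
    try ring
  have haevα : aeval α p = 0 := by rw [haev α]; ring
  have haevβ : aeval β p = 0 := by rw [haev β]; ring
  have hintα : IsIntegral ℚ α := ⟨p, hpm, by rwa [← aeval_def]⟩
  have hintβ : IsIntegral ℚ β := ⟨p, hpm, by rwa [← aeval_def]⟩
  have h2mem : ∀ F : IntermediateField ℚ ℂ, (2 : ℂ) ∈ F := by
    intro F
    have := hratmem F 2
    norm_cast at this
  have hs1Qα : s1 ∈ ℚ⟮α⟯ := by
    have h1 : s1 = α ^ 2 - 2 := by linear_combination -hαe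
    rw [h1]
    exact sub_mem (pow_mem (mem_adjoin_simple_self ℚ α) 2) (h2mem _)
  have hαnotinQs1 : α ∉ ℚ⟮s1⟯ := fun h => key1 α h hαe
  have hs1int : IsIntegral ℚ s1 := quad_integral s1 (2 + t)
    (by rw [eq_ratCast]; push_cast; exact hs1)
  haveI hfdQs1 : FiniteDimensional ℚ ℚ⟮s1⟯ := adjoin.finiteDimensional hs1int
  have hrankQs1 : finrank ℚ ℚ⟮s1⟯ = 2 := quad_finrank s1 (2 + t)
    (by rw [eq_ratCast]; push_cast; exact hs1) hs1notin
  have h2ps1mem : (2 : ℂ) + s1 ∈ ℚ⟮s1⟯ := add_mem (h2mem _) (mem_adjoin_simple_self ℚ s1)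
  have hrel1 : finrank ℚ⟮s1⟯ ℚ⟮s1⟯⟮α⟯ = 2 := by
    apply quad_finrank α (⟨2 + s1, h2ps1mem⟩ : ℚ⟮s1⟯) hαe
    rw [mem_range_algebraMap_iff]
    exact hαnotinQs1
  have h4 : finrank ℚ ℚ⟮s1, α⟯ = 4 := by
    rw [← adjoin_simple_adjoin_simple]
    have hmul := Module.finrank_mul_finrank ℚ ℚ⟮s1⟯ ℚ⟮s1⟯⟮α⟯
    have hrfl : finrank ℚ (ℚ⟮s1⟯⟮α⟯.restrictScalars ℚ) = finrank ℚ ℚ⟮s1⟯⟮α⟯ := rfl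
    refine hrfl.trans ?_
    rw [← hmul, hrankQs1, hrel1]
  have hQαeq : ℚ⟮s1, α⟯ = ℚ⟮α⟯ := by
    apply le_antisymm
    · rw [adjoin_le_iff]
      rintro x (rfl | rfl)
      · exact hs1Qα
      · exact mem_adjoin_simple_self ℚ _
    · exact adjoin.mono _ _ _ (by simp)
  have hQαrank : finrank ℚ ℚ⟮α⟯ = 4 := by rw [← hQαeq]; exact h4
  -- p is the minimal polynomial of α
  have hmineq : minpoly ℚ α = p := by
    obtain ⟨c, hc⟩ := minpoly.dvd ℚ α haevα
    have hmne : minpoly ℚ α ≠ 0 := minpoly.ne_zero hintα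
    have hcne : c ≠ 0 := by
      rintro rfl
      rw [mul_zero] at hc
      exact hpne hc
    have hdegm : (minpoly ℚ α).natDegree = 4 :=
      ((IntermediateField.adjoin.finrank hintα).symm).trans hQαrank
    have h5 : (minpoly ℚ α * c).natDegree = 4 := hc ▸ hpdeg
    rw [natDegree_mul hmne hcne, hdegm] at h5
    have hdegc : c.natDegree = 0 := by omega
    have hcC := eq_C_of_natDegree_eq_zero hdegc
    have hlc : leadingCoeff p = leadingCoeff (minpoly ℚ α) * leadingCoeff c := by
      rw [hc, leadingCoeff_mul]
    rw [hpm.leadingCoeff, (minpoly.monic hintα).leadingCoeff, one_mul] at hlc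
    rw [leadingCoeff, hdegc] at hlc
    have hc1 : c = 1 := by rw [hcC, ← hlc, map_one]
    rw [hc, hc1, mul_one]
  have hirr : Irreducible p := hmineq ▸ minpoly.irreducible hintα
  -- β is not in ℚ(α)
  haveI hfdQα : FiniteDimensional ℚ ℚ⟮α⟯ := adjoin.finiteDimensional hintα
  have hs2sq : s2 ^ 2 = (α * β) ^ 2 := by
    rw [mul_pow, hαe, hβe]
    linear_combination hs2 + hs1
  have hβnotin : β ∉ ℚ⟮α⟯ := by
    intro hβmem
    have hs2' : s2 ∈ ℚ⟮α⟯ := by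
      rcases hsqc s2 (α * β) hs2sq with h | h <;> rw [h]
      · exact mul_mem (mem_adjoin_simple_self ℚ α) hβmem
      · exact neg_mem (mul_mem (mem_adjoin_simple_self ℚ α) hβmem)
    have hle : IntermediateField.adjoin ℚ {s1, s2} ≤ ℚ⟮α⟯ := by
      rw [adjoin_le_iff]
      rintro x (rfl | rfl)
      · exact hs1Qα
      · exact hs2'
    have heq2 : IntermediateField.adjoin ℚ {s1, s2} = ℚ⟮α⟯ :=
      IntermediateField.eq_of_le_of_finrank_eq hle (hdeg.trans hQαrank.symm)
    have hαmem : α ∈ IntermediateField.adjoin ℚ {s1, s2} := by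
      rw [heq2]
      exact mem_adjoin_simple_self ℚ α
    exact key2 α hαmem hαe
  -- the splitting field K = ℚ(α, β) has degree 8
  have h2ms1mem : (2 : ℂ) - s1 ∈ ℚ⟮α⟯ := sub_mem (h2mem _) hs1Qα
  have hrel2 : finrank ℚ⟮α⟯ ℚ⟮α⟯⟮β⟯ = 2 := by
    apply quad_finrank β (⟨2 - s1, h2ms1mem⟩ : ℚ⟮α⟯) hβe
    rw [mem_range_algebraMap_iff]
    exact hβnotin
  have hKrank : finrank ℚ ℚ⟮α, β⟯ = 8 := by
    rw [← adjoin_simple_adjoin_simple]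
    have hmul := Module.finrank_mul_finrank ℚ ℚ⟮α⟯ ℚ⟮α⟯⟮β⟯
    have hrfl : finrank ℚ (ℚ⟮α⟯⟮β⟯.restrictScalars ℚ) = finrank ℚ ℚ⟮α⟯⟮β⟯ := rfl
    refine hrfl.trans ?_
    rw [← hmul, hQαrank, hrel2]
  -- root set of p in ℂ
  have hroots : p.rootSet ℂ = {α, -α, β, -β} := by
    ext x
    rw [mem_rootSet]
    constructor
    · rintro ⟨-, hx⟩
      rw [haev x] at hx
      simp only [Set.mem_insert_iff, Set.mem_singleton_iff]
      rcases mul_eq_zero.mp hx with h | h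
      · rcases hsqc x α (by linear_combination h) with h2 | h2
        · exact Or.inl h2
        · exact Or.inr (Or.inl h2)
      · rcases hsqc x β (by linear_combination h) with h2 | h2
        · exact Or.inr (Or.inr (Or.inl h2))
        · exact Or.inr (Or.inr (Or.inr h2))
    · intro hx
      simp only [Set.mem_insert_iff, Set.mem_singleton_iff] at hx
      refine ⟨hpne, ?_⟩
      rcases hx with rfl | rfl | rfl | rfl <;> rw [haev] <;> ring
  have hαK : α ∈ ℚ⟮α, β⟯ := subset_adjoin _ _ (Set.mem_insert _ _)
  have hβK : β ∈ ℚ⟮α, β⟯ := subset_adjoin _ _ (Set.mem_insert_of_mem _ rfl)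
  have hKsplit : IntermediateField.adjoin ℚ (p.rootSet ℂ) = ℚ⟮α, β⟯ := by
    rw [hroots]
    apply le_antisymm
    · rw [adjoin_le_iff]
      rintro x (rfl | rfl | rfl | rfl)
      · exact hαK
      · exact neg_mem hαK
      · exact hβK
      · exact neg_mem hβK
    · apply adjoin.mono
      intro x hx
      simp only [Set.mem_insert_iff, Set.mem_singleton_iff] at hx ⊢
      tauto
  haveI hKsf : IsSplittingField ℚ (ℚ⟮α, β⟯ : IntermediateField ℚ ℂ) p :=
    hKsplit ▸ adjoin_rootSet_isSplittingField (IsAlgClosed.splits _)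
  haveI hKfd : FiniteDimensional ℚ (ℚ⟮α, β⟯ : IntermediateField ℚ ℂ) := by
    apply finiteDimensional_adjoin
    rintro x (rfl | rfl)
    · exact hintα
    · exact hintβ
  have hsep : p.Separable := hirr.separable
  haveI hgal : IsGalois ℚ (ℚ⟮α, β⟯ : IntermediateField ℚ ℂ) :=
    IsGalois.of_separable_splitting_field hsep
  have hcardG : Fintype.card ((ℚ⟮α, β⟯ : IntermediateField ℚ ℂ) ≃ₐ[ℚ] ℚ⟮α, β⟯) = 8 := by
    rw [← Nat.card_eq_fintype_card, IsGalois.card_aut_eq_finrank ℚ (ℚ⟮α, β⟯ : IntermediateField ℚ ℂ)]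
    exact hKrank
  set K : IntermediateField ℚ ℂ := ℚ⟮α, β⟯ with hKdef
  set α' : K := ⟨α, hαK⟩ with hα'def
  set β' : K := ⟨β, hβK⟩ with hβ'def
  -- extensionality for automorphisms of K
  have Gext : ∀ σ τ : K ≃ₐ[ℚ] K, σ α' = τ α' → σ β' = τ β' → σ = τ := by
    intro σ τ h1 h2
    have hext : σ.toAlgHom = τ.toAlgHom := by
      apply IntermediateField.adjoin_algHom_ext
      intro x hx
      rcases hx with rfl | hx
      · exact h1
      · rcases hx with rfl
        exact h2
    exact AlgEquiv.ext fun x => DFunLike.congr_fun hext x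
  have hvalinj : Function.Injective (algebraMap K ℂ) := (algebraMap K ℂ).injective
  have haevα' : aeval α' p = 0 := by
    apply hvalinj
    rw [map_zero]
    show K.val ((aeval α') p) = 0
    rw [← aeval_algHom_apply K.val α' p]
    exact haevα
  have hsum4 : α' ^ 2 + β' ^ 2 = 4 := by
    apply hvalinj
    rw [map_add, map_pow, map_pow, map_ofNat]
    show α ^ 2 + β ^ 2 = 4
    rw [hαe, hβe]; ring
  -- image of automorphisms on the generators
  have himage : ∀ σ : K ≃ₐ[ℚ] K,
      (((σ α' : ℂ), (σ β' : ℂ)) = (α, β) ∨ ((σ α' : ℂ), (σ β' : ℂ)) = (α, -β)) ∨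
      (((σ α' : ℂ), (σ β' : ℂ)) = (-α, β) ∨ ((σ α' : ℂ), (σ β' : ℂ)) = (-α, -β)) ∨
      (((σ α' : ℂ), (σ β' : ℂ)) = (β, α) ∨ ((σ α' : ℂ), (σ β' : ℂ)) = (β, -α)) ∨
      (((σ α' : ℂ), (σ β' : ℂ)) = (-β, α) ∨ ((σ α' : ℂ), (σ β' : ℂ)) = (-β, -α)) := by
    intro σ
    set x : ℂ := (σ α' : ℂ) with hxdef
    set y : ℂ := (σ β' : ℂ) with hydef
    have hx0 : aeval x p = 0 := by
      have h1 : aeval (σ α') p = σ (aeval α' p) := aeval_algHom_apply σ α' p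
      rw [haevα', map_zero] at h1
      have h2 := aeval_algHom_apply K.val (σ α') p
      rw [h1, map_zero] at h2
      exact h2
    have hxy : x ^ 2 + y ^ 2 = 4 := by
      have h1 := congrArg σ hsum4
      rw [map_add, map_pow, map_pow, map_ofNat] at h1
      have h2 := congrArg (algebraMap K ℂ) h1
      rw [map_add, map_pow, map_pow, map_ofNat] at h2
      exact h2
    rw [haev x] at hx0
    rcases mul_eq_zero.mp hx0 with h | h
    · have hxsq : x ^ 2 = α ^ 2 := by linear_combination h
      have hy2 : y ^ 2 = β ^ 2 := by
        rw [hβe]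
        rw [hxsq, hαe] at hxy
        linear_combination hxy
      rcases hsqc x α hxsq with h1 | h1 <;> rcases hsqc y β hy2 with h2 | h2
      · exact Or.inl (Or.inl (by rw [h1, h2]))
      · exact Or.inl (Or.inr (by rw [h1, h2]))
      · exact Or.inr (Or.inl (Or.inl (by rw [h1, h2])))
      · exact Or.inr (Or.inl (Or.inr (by rw [h1, h2])))
    · have hxsq : x ^ 2 = β ^ 2 := by linear_combination h
      have hy2 : y ^ 2 = α ^ 2 := by
        rw [hαe]
        rw [hxsq, hβe] at hxy
        linear_combination hxy
      rcases hsqc x β hxsq with h1 | h1 <;> rcases hsqc y α hy2 with h2 | h2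
      · exact Or.inr (Or.inr (Or.inl (Or.inl (by rw [h1, h2]))))
      · exact Or.inr (Or.inr (Or.inl (Or.inr (by rw [h1, h2]))))
      · exact Or.inr (Or.inr (Or.inr (Or.inl (by rw [h1, h2]))))
      · exact Or.inr (Or.inr (Or.inr (Or.inr (by rw [h1, h2]))))
  -- extract specific automorphisms by counting
  have hΦinj : Function.Injective
      (fun σ : K ≃ₐ[ℚ] K => (((σ α' : K) : ℂ), ((σ β' : K) : ℂ))) := by
    intro σ τ h
    exact Gext σ τ (Subtype.ext (congrArg Prod.fst h)) (Subtype.ext (congrArg Prod.snd h))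
  have hsurj : ∀ z : ℂ × ℂ,
      (z = (α, β) ∨ z = (α, -β)) ∨ (z = (-α, β) ∨ z = (-α, -β)) ∨
      (z = (β, α) ∨ z = (β, -α)) ∨ (z = (-β, α) ∨ z = (-β, -α)) →
      ∃ σ : K ≃ₐ[ℚ] K, (((σ α' : K) : ℂ), ((σ β' : K) : ℂ)) = z := by
    set Φc : (K ≃ₐ[ℚ] K) → ℂ × ℂ :=
      fun σ => (((σ α' : K) : ℂ), ((σ β' : K) : ℂ)) with hΦdef
    set fv : Fin 8 → ℂ × ℂ := ![(α, β), (α, -β), (-α, β), (-α, -β),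
      (β, α), (β, -α), (-β, α), (-β, -α)] with hfvdef
    have himg2 : ∀ σ, ∃ i : Fin 8, Φc σ = fv i := by
      intro σ
      rcases himage σ with (h | h) | (h | h) | (h | h) | (h | h)
      exacts [⟨0, h⟩, ⟨1, h⟩, ⟨2, h⟩, ⟨3, h⟩, ⟨4, h⟩, ⟨5, h⟩, ⟨6, h⟩, ⟨7, h⟩]
    have hsub : Finset.univ.image Φc ⊆ Finset.univ.image fv := by
      intro z hz
      rw [Finset.mem_image] at hz ⊢
      obtain ⟨σ, -, rfl⟩ := hz
      obtain ⟨i, hi⟩ := himg2 σ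
      exact ⟨i, Finset.mem_univ _, hi.symm⟩
    have hcard1 : (Finset.univ.image Φc).card = 8 := by
      rw [Finset.card_image_of_injective _ hΦinj, Finset.card_univ, hcardG]
    have heqS : Finset.univ.image Φc = Finset.univ.image fv := by
      apply Finset.eq_of_subset_of_card_le hsub
      refine le_trans Finset.card_image_le ?_
      rw [Finset.card_univ, hcard1]
      simp
    intro z hz
    have hzfv : ∃ i : Fin 8, fv i = z := by
      rcases hz with (rfl | rfl) | (rfl | rfl) | (rfl | rfl) | (rfl | rfl)
      exacts [⟨0, rfl⟩, ⟨1, rfl⟩, ⟨2, rfl⟩, ⟨3, rfl⟩, ⟨4, rfl⟩, ⟨5, rfl⟩, ⟨6, rfl⟩, ⟨7, rfl⟩]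
    obtain ⟨i, hi⟩ := hzfv
    have hmem : fv i ∈ Finset.univ.image Φc := by
      rw [heqS]
      exact Finset.mem_image_of_mem _ (Finset.mem_univ i)
    rw [Finset.mem_image] at hmem
    obtain ⟨σ, -, hσ⟩ := hmem
    exact ⟨σ, hσ.trans hi⟩
  obtain ⟨σ, hσv⟩ := hsurj (β, -α) (by tauto)
  obtain ⟨τ, hτv⟩ := hsurj (α, -β) (by tauto)
  have hσα : σ α' = β' := Subtype.ext (congrArg Prod.fst hσv)
  have hσβ : σ β' = -α' := Subtype.ext (congrArg Prod.snd hσv)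
  have hτα : τ α' = α' := Subtype.ext (congrArg Prod.fst hτv)
  have hτβ : τ β' = -β' := Subtype.ext (congrArg Prod.snd hτv)
  -- disequalities among roots
  have hαnegα : α ≠ -α := fun h => hα0 (by linear_combination h / 2)
  have hβnegβ : β ≠ -β := fun h => hβ0 (by linear_combination h / 2)
  have hβnegα : β ≠ -α := fun h => hαneβ' (by rw [h]; ring)
  -- powers of σ on generators
  have hσ2α : (σ ^ 2) α' = -α' := by
    rw [sq]
    show σ (σ α') = -α'
    rw [hσα, hσβ]
  have hσ2β : (σ ^ 2) β' = -β' := by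
    rw [sq]
    show σ (σ β') = -β'
    rw [hσβ, map_neg, hσα]
  have hpow3 : σ ^ 3 = σ * σ * σ := by rw [pow_succ, pow_succ, pow_one]
  have hσ3α : (σ ^ 3) α' = -β' := by
    rw [hpow3]
    show σ (σ (σ α')) = -β'
    rw [hσα, hσβ, map_neg, hσα]
  have hσ3β : (σ ^ 3) β' = α' := by
    rw [hpow3]
    show σ (σ (σ β')) = α'
    rw [hσβ, map_neg, hσα, map_neg, hσβ, neg_neg]
  have hσ4 : σ ^ 4 = 1 := by
    apply Gext
    · show (σ ^ 4) α' = (1 : K ≃ₐ[ℚ] K) α'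
      rw [show σ ^ 4 = σ ^ 3 * σ from pow_succ σ 3, AlgEquiv.mul_apply, hσα,
        hσ3β, AlgEquiv.one_apply]
    · show (σ ^ 4) β' = (1 : K ≃ₐ[ℚ] K) β'
      rw [show σ ^ 4 = σ ^ 3 * σ from pow_succ σ 3, AlgEquiv.mul_apply, hσβ,
        map_neg, hσ3α, neg_neg, AlgEquiv.one_apply]
  have hτ2 : τ ^ 2 = 1 := by
    apply Gext
    · show (τ ^ 2) α' = (1 : K ≃ₐ[ℚ] K) α'
      rw [sq, AlgEquiv.mul_apply, hτα, hτα, AlgEquiv.one_apply]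
    · show (τ ^ 2) β' = (1 : K ≃ₐ[ℚ] K) β'
      rw [sq, AlgEquiv.mul_apply, hτβ, map_neg, hτβ, neg_neg, AlgEquiv.one_apply]
  have hcommrel : σ * τ = τ * σ ^ 3 := by
    apply Gext
    · rw [AlgEquiv.mul_apply, AlgEquiv.mul_apply, hτα, hσα, hσ3α, map_neg, hτβ, neg_neg]
    · rw [AlgEquiv.mul_apply, AlgEquiv.mul_apply, hτβ, map_neg, hσβ, neg_neg, hσ3β, hτα]
  -- value-level disequalities between automorphisms
  have hτne1 : τ ≠ 1 := by
    intro h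
    rw [h, AlgEquiv.one_apply] at hτβ
    exact hβnegβ (congrArg Subtype.val hτβ)
  have hτneσ : τ ≠ σ := by
    intro h
    rw [h, hσα] at hτα
    exact hαneβ (congrArg Subtype.val hτα).symm
  have hτneσ2 : τ ≠ σ ^ 2 := by
    intro h
    rw [h, hσ2α] at hτα
    exact hαnegα (congrArg Subtype.val hτα).symm
  have hτneσ3 : τ ≠ σ ^ 3 := by
    intro h
    rw [h, hσ3α] at hτα
    exact hαneβ' (congrArg Subtype.val hτα).symm
  have hσ2ne1 : σ ^ 2 ≠ 1 := by
    intro h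
    rw [h, AlgEquiv.one_apply] at hσ2α
    exact hαnegα (show α = -α from congrArg Subtype.val hσ2α)
  have hnab : σ * τ ≠ τ * σ := by
    intro h
    have h1 : (σ * τ) α' = (τ * σ) α' := by rw [h]
    rw [AlgEquiv.mul_apply, AlgEquiv.mul_apply, hτα, hσα, hτβ] at h1
    exact hβnegβ (show β = -β from congrArg Subtype.val h1)
  -- order of σ is 4
  have hordσ : orderOf σ = 4 := by
    have hdvd : orderOf σ ∣ 4 := orderOf_dvd_of_pow_eq_one hσ4
    have hpos : 0 < orderOf σ := orderOf_pos σ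
    have hle : orderOf σ ≤ 4 := Nat.le_of_dvd (by norm_num) hdvd
    have h124 : orderOf σ = 1 ∨ orderOf σ = 2 ∨ orderOf σ = 4 := by
      obtain ⟨c, hc⟩ := hdvd
      interval_cases h : orderOf σ <;> omega
    rcases h124 with h | h | h
    · exact absurd (by rw [orderOf_eq_one_iff.mp h, one_pow] : σ ^ 2 = 1) hσ2ne1
    · exact absurd (by rw [← h]; exact pow_orderOf_eq_one σ) hσ2ne1
    · exact h
  have hmod : ∀ n : ℕ, σ ^ n = σ ^ (n % 4) := by
    intro n
    conv_lhs => rw [← Nat.mod_add_div n 4]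
    rw [pow_add, pow_mul, hσ4, one_pow, mul_one]
  have hpoweq : ∀ m n : ℕ, m % 4 = n % 4 → σ ^ m = σ ^ n := by
    intro m n h
    rw [hmod m, hmod n, h]
  have hcommn : ∀ n : ℕ, σ ^ n * τ = τ * σ ^ (3 * n) := by
    intro n
    induction n with
    | zero => simp
    | succ k ih =>
      rw [pow_succ, mul_assoc, hcommrel, ← mul_assoc, ih, mul_assoc, ← pow_add]
      have h3 : 3 * k + 3 = 3 * (k + 1) := by ring
      rw [h3]
  have hvs : ∀ i j : ZMod 4, σ ^ (3 * i.val + j.val) = σ ^ ((j - i).val) := by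
    intro i j
    apply hpoweq
    have h4 : (4 : ZMod 4) = 0 := by decide
    have h1 : j - i = j + 3 * i := by linear_combination (-i) * h4
    rw [h1, ZMod.val_add, ZMod.val_mul]
    have h3 : (3 : ZMod 4).val = 3 := rfl
    rw [h3]
    omega
  have hτnotpow : ∀ m : ℕ, τ ≠ σ ^ m := by
    intro m heq
    rw [hmod m] at heq
    have hm : m % 4 < 4 := Nat.mod_lt _ (by norm_num)
    set k := m % 4 with hk
    interval_cases k
    · rw [pow_zero] at heq; exact hτne1 heq
    · rw [pow_one] at heq; exact hτneσ heq
    · exact hτneσ2 heq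
    · exact hτneσ3 heq
  have hττ : τ * τ = 1 := by rw [← sq]; exact hτ2
  -- the dihedral group morphism
  obtain ⟨φ, hφr, hφsr⟩ : ∃ φ : DihedralGroup 4 →* (K ≃ₐ[ℚ] K),
      (∀ i : ZMod 4, φ (DihedralGroup.r i) = σ ^ i.val) ∧
      (∀ i : ZMod 4, φ (DihedralGroup.sr i) = τ * σ ^ i.val) := by
    refine ⟨MonoidHom.mk' (fun g => match g with
      | DihedralGroup.r i => σ ^ i.val
      | DihedralGroup.sr i => τ * σ ^ i.val) ?_, fun i => rfl, fun i => rfl⟩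
    rintro (i | i) (j | j)
    · show σ ^ ((i + j).val) = σ ^ i.val * σ ^ j.val
      rw [← pow_add]
      apply hpoweq
      rw [ZMod.val_add]
      omega
    · show τ * σ ^ ((j - i).val) = σ ^ i.val * (τ * σ ^ j.val)
      rw [← hvs i j, pow_add, ← mul_assoc, ← hcommn, mul_assoc]
    · show τ * σ ^ ((i + j).val) = (τ * σ ^ i.val) * σ ^ j.val
      rw [mul_assoc, ← pow_add]
      have := hpoweq ((i + j).val) (i.val + j.val) (by rw [ZMod.val_add]; omega)
      rw [this]
    · show σ ^ ((j - i).val) = (τ * σ ^ i.val) * (τ * σ ^ j.val)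
      rw [mul_assoc, ← mul_assoc (σ ^ i.val) τ (σ ^ j.val), hcommn,
        mul_assoc (τ) (σ ^ (3 * i.val)) (σ ^ j.val), ← mul_assoc τ τ, hττ, one_mul,
        ← pow_add, hvs]
  have hφinj : Function.Injective φ := by
    intro a b hab
    rcases a with i | i <;> rcases b with j | j
    · rw [hφr, hφr] at hab
      have h3 := (pow_eq_pow_iff_modEq).mp hab
      rw [hordσ] at h3
      have hi := ZMod.val_lt i
      have hj := ZMod.val_lt j
      have : i.val = j.val := by
        have h4 : i.val % 4 = j.val % 4 := h3
        omega
      exact congrArg DihedralGroup.r (ZMod.val_injective 4 this)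
    · rw [hφr, hφsr] at hab
      exfalso
      apply hτnotpow (i.val + 3 * j.val)
      have h1 : σ ^ i.val * σ ^ (3 * j.val) = τ * (σ ^ j.val * σ ^ (3 * j.val)) := by
        rw [hab, mul_assoc]
      rw [← pow_add, ← pow_add] at h1
      have h2 : σ ^ (j.val + 3 * j.val) = 1 := by
        rw [hmod]
        have h5 : (j.val + 3 * j.val) % 4 = 0 := by omega
        rw [h5, pow_zero]
      rw [h2, mul_one] at h1
      exact h1.symm
    · rw [hφsr, hφr] at hab
      exfalso
      apply hτnotpow (j.val + 3 * i.val)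
      have h1 : τ * (σ ^ i.val * σ ^ (3 * i.val)) = σ ^ j.val * σ ^ (3 * i.val) := by
        rw [← mul_assoc, hab]
      rw [← pow_add, ← pow_add] at h1
      have h2 : σ ^ (i.val + 3 * i.val) = 1 := by
        rw [hmod]
        have h5 : (i.val + 3 * i.val) % 4 = 0 := by omega
        rw [h5, pow_zero]
      rw [h2, mul_one] at h1
      exact h1
    · rw [hφsr, hφsr] at hab
      have hab2 : σ ^ i.val = σ ^ j.val := mul_left_cancel hab
      have h3 := (pow_eq_pow_iff_modEq).mp hab2
      rw [hordσ] at h3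
      have hi := ZMod.val_lt i
      have hj := ZMod.val_lt j
      have : i.val = j.val := by
        have h4 : i.val % 4 = j.val % 4 := h3
        omega
      exact congrArg DihedralGroup.sr (ZMod.val_injective 4 this)
  have hφbij : Function.Bijective φ := by
    rw [Fintype.bijective_iff_injective_and_card]
    refine ⟨hφinj, ?_⟩
    rw [DihedralGroup.card, hcardG]
  -- transfer everything to the abstract splitting field
  have e : (↥K) ≃ₐ[ℚ] p.SplittingField := IsSplittingField.algEquiv (↥K) p
  have E0 : ((↥K) ≃ₐ[ℚ] (↥K)) ≃* (p.SplittingField ≃ₐ[ℚ] p.SplittingField) :=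
    AlgEquiv.autCongr e
  refine ⟨hirr, ?_, ?_, ?_⟩
  · rw [← Nat.card_congr E0.toEquiv, Nat.card_eq_fintype_card, hcardG]
  · intro hall
    apply hnab
    have h1 := hall (E0 σ) (E0 τ)
    rw [← map_mul, ← map_mul] at h1
    exact E0.injective h1
  · exact ⟨((MulEquiv.ofBijective φ hφbij).trans E0).symm⟩
end

section
/- Let t, w be rational numbers with t² + w² = 4. Then for every odd natural number n, C_n(t)² + C_n(w)² = 4, where C_n is the Chebyshev polynomial of the first kind with C_0 = 2, C_1 = x. -/
lemma chebC_closed (x : ℚ) (u v : ℂ) (hsum : u + v = (x : ℂ)) (hprod : u * v = 1) :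
    ∀ n : ℕ, (chebC x n : ℂ) = u ^ n + v ^ n := by
  intro n
  induction n using Nat.strong_induction_on with
  | _ n ih =>
    match n with
    | 0 => norm_num [chebC]
    | 1 => simp [chebC, hsum]
    | (m + 2) =>
      rw [chebC]
      push_cast
      rw [ih (m + 1) (by omega), ih m (by omega), ← hsum]
      linear_combination (u ^ m + v ^ m) * hprod

theorem circle_chebC (t w : ℚ) (h : t ^ 2 + w ^ 2 = 4) :
    ∀ n : ℕ, Odd n → chebC t n ^ 2 + chebC w n ^ 2 = 4 := by
  intro n hn
  obtain ⟨a, ha⟩ : ∃ a : ℂ, a = ((t : ℂ) + Complex.I * w) / 2 := ⟨_, rfl⟩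
  obtain ⟨v, hv⟩ : ∃ v : ℂ, v = ((t : ℂ) - Complex.I * w) / 2 := ⟨_, rfl⟩
  have hC : ((t : ℂ) ^ 2 + (w : ℂ) ^ 2) = 4 := by exact_mod_cast congrArg (Rat.cast : ℚ → ℂ) h
  have hav : a * v = 1 := by
    rw [ha, hv]
    have hI : Complex.I ^ 2 = -1 := Complex.I_sq
    linear_combination hC / 4 - (w : ℂ) ^ 2 / 4 * hI
  have ht : ∀ m : ℕ, (chebC t m : ℂ) = a ^ m + v ^ m := by
    apply chebC_closed
    · rw [ha, hv]; ring
    · exact hav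
  have hw : ∀ m : ℕ, (chebC w m : ℂ) = (Complex.I * v) ^ m + (-(Complex.I * a)) ^ m := by
    apply chebC_closed
    · rw [ha, hv]
      have hI : Complex.I ^ 2 = -1 := Complex.I_sq
      linear_combination -(w : ℂ) / 2 * hI - (w:ℂ) * hI / 2
    · have hI : Complex.I ^ 2 = -1 := Complex.I_sq
      linear_combination (-(a * v)) * hI + hav
  have key : ((chebC t n : ℚ) ^ 2 + (chebC w n) ^ 2 : ℂ) = 4 := by
    rw [ht n, hw n]
    have h1 : (Complex.I * v) ^ n = Complex.I ^ n * v ^ n := mul_pow _ _ _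
    have h2 : (-(Complex.I * a)) ^ n = -(Complex.I ^ n * a ^ n) := by
      rw [neg_pow, Odd.neg_one_pow hn, mul_pow]; ring
    rw [h1, h2]
    have h3 : (Complex.I ^ n) ^ 2 = -1 := by
      rw [← pow_mul, mul_comm, pow_mul, Complex.I_sq, Odd.neg_one_pow hn]
    have h4 : a ^ n * v ^ n = 1 := by rw [← mul_pow, hav, one_pow]
    linear_combination (v ^ n - a ^ n) ^ 2 * h3 + 4 * h4
  exact_mod_cast key
end
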